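/- In the Klein (projective ball) model, the hyperbolic perpendicular bisector between the origin and a point n ∈ D³ (n ≠ 0) is the Euclidean plane {r ∈ D³ : n·r = t} with t = 1 − √(1 − |n|²), in the sense that points r of this plane satisfy cosh d(0, r) = cosh d(n, r), where d is the Klein-model hyperbolic distance cosh d(u,v) = (1 − u·v)/√((1−|u|²)(1−|v|²)). -/

import Mathlib

open scoped RealInnerProductSpace

/-- `cosh` of the hyperbolic distance between two points of the Klein model. -/
noncomputable def kleinCoshDist (u v : EuclideanSpace ℝ (Fin 3)) : ℝ :=
  (1 - ⟪u, v⟫) / Real.sqrt ((1 - ‖u‖ ^ 2) * (1 - ‖v‖ ^ 2))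

lemma kleinCoshDist_zero_left (v : EuclideanSpace ℝ (Fin 3)) :
    kleinCoshDist 0 v = 1 / Real.sqrt (1 - ‖v‖ ^ 2) := by
  simp [kleinCoshDist]

/-- On the plane `⟪u, v⟫ = 1 - √(1 - ‖u‖²)` the numerator `1 - ⟪u, v⟫` is exactly the factor
`√(1 - ‖u‖²)` of the denominator, which cancels. -/
lemma kleinCoshDist_of_inner_eq {u v : EuclideanSpace ℝ (Fin 3)} (hu : ‖u‖ < 1)
    (huv : ⟪u, v⟫ = 1 - Real.sqrt (1 - ‖u‖ ^ 2)) :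
    kleinCoshDist u v = 1 / Real.sqrt (1 - ‖v‖ ^ 2) := by
  have hu2 : 0 < 1 - ‖u‖ ^ 2 := by nlinarith [norm_nonneg u]
  have hsqrt : Real.sqrt (1 - ‖u‖ ^ 2) ≠ 0 := (Real.sqrt_pos.mpr hu2).ne'
  rw [kleinCoshDist, huv, sub_sub_cancel, Real.sqrt_mul hu2.le, ← mul_div_mul_left 1 _ hsqrt,
    mul_one]

theorem klein_bisector_general (n r : EuclideanSpace ℝ (Fin 3))
    (hn1 : ‖n‖ < 1)
    (hplane : ⟪n, r⟫ = 1 - Real.sqrt (1 - ‖n‖ ^ 2)) :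
    kleinCoshDist 0 r = kleinCoshDist n r := by
  rw [kleinCoshDist_zero_left, kleinCoshDist_of_inner_eq hn1 hplane]

/-- In the Klein model, the plane `{r : n·r = t}` with `t = 1 − √(1 − |n|²)` is
the hyperbolic perpendicular bisector between the origin and `n`: any point `r`
of the unit ball on this plane is hyperbolically equidistant from `0` and `n`. -/
theorem klein_bisector (n r : EuclideanSpace ℝ (Fin 3)) (hn : n ≠ 0)
    (hn1 : ‖n‖ < 1) (hr1 : ‖r‖ < 1)
    (hplane : ⟪n, r⟫ = 1 - Real.sqrt (1 - ‖n‖ ^ 2)) :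
    kleinCoshDist 0 r = kleinCoshDist n r :=
  klein_bisector_general n r hn1 hplane
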